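/- For any constants k > 0 and σ > 0, the equation k*/(2k) - 1/2 + Φ(-k*/σ) = 0 (where Φ is the standard normal CDF) has a unique strictly positive solution k* if and only if k > σ√(π/2), and in that case k* < k. -/

import Mathlib

open MeasureTheory

noncomputable def stdNormalCDF (t : ℝ) : ℝ :=
  ∫ s in Set.Iic t, (Real.sqrt (2 * Real.pi))⁻¹ * Real.exp (-s ^ 2 / 2)

noncomputable def stdPDF (s : ℝ) : ℝ := (Real.sqrt (2 * Real.pi))⁻¹ * Real.exp (-s ^ 2 / 2)

lemma stdPDF_pos (s : ℝ) : 0 < stdPDF s := by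
  apply mul_pos (inv_pos.2 (Real.sqrt_pos.2 (by positivity))) (Real.exp_pos _)

lemma stdPDF_cont : Continuous stdPDF := by
  unfold stdPDF; continuity

lemma stdPDF_int : Integrable stdPDF := by
  have h : Integrable (fun s : ℝ => Real.exp (-(1/2 : ℝ) * s ^ 2)) := integrable_exp_neg_mul_sq (by norm_num)
  have : stdPDF = fun s => (Real.sqrt (2 * Real.pi))⁻¹ * Real.exp (-(1/2 : ℝ) * s ^ 2) := by
    funext s; unfold stdPDF; ring_nf
  rw [this]
  exact h.const_mul _

lemma stdPDF_total : ∫ s : ℝ, stdPDF s = 1 := by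
  have : ∫ s : ℝ, stdPDF s = (Real.sqrt (2 * Real.pi))⁻¹ * ∫ s : ℝ, Real.exp (-(1/2 : ℝ) * s ^ 2) := by
    rw [← integral_const_mul]; congr 1; funext s; unfold stdPDF; ring_nf
  rw [this, integral_gaussian]
  rw [show Real.pi / (1/2 : ℝ) = 2 * Real.pi by ring]
  rw [inv_mul_cancel₀ (by positivity)]

lemma stdNormalCDF_eq (t : ℝ) : stdNormalCDF t = ∫ s in Set.Iic t, stdPDF s := rfl

lemma cdf_zero : stdNormalCDF 0 = 1/2 := by
  have heven : ∀ x : ℝ, stdPDF (-x) = stdPDF x := by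
    intro x; unfold stdPDF; rw [neg_pow]; ring_nf
  have h1 : (∫ s in Set.Iic (0:ℝ), stdPDF s) = ∫ s in Set.Ioi (0:ℝ), stdPDF s := by
    rw [show Set.Ioi (0:ℝ) = Set.Ioi (-(0:ℝ)) by norm_num, ← integral_comp_neg_Iic]
    simp_rw [heven]
  have h2 : (∫ s in Set.Iic (0:ℝ), stdPDF s) + (∫ s in Set.Ioi (0:ℝ), stdPDF s) = 1 := by
    rw [intervalIntegral.integral_Iic_add_Ioi stdPDF_int.integrableOn stdPDF_int.integrableOn, stdPDF_total]
  rw [stdNormalCDF_eq]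
  linarith [h1, h2]

lemma cdf_hasDerivAt (t : ℝ) : HasDerivAt stdNormalCDF (stdPDF t) t := by
  have key : stdNormalCDF = fun u => (∫ s in Set.Iic (0:ℝ), stdPDF s) + ∫ x in (0:ℝ)..u, stdPDF x := by
    funext u
    rw [stdNormalCDF_eq, ← intervalIntegral.integral_Iic_sub_Iic stdPDF_int.integrableOn
      stdPDF_int.integrableOn]
    ring
  rw [key]
  exact (intervalIntegral.integral_hasDerivAt_right (stdPDF_int.intervalIntegrable)
    (stdPDF_cont.stronglyMeasurableAtFilter _ _) stdPDF_cont.continuousAt).const_add _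

lemma cdf_pos (x : ℝ) : 0 < stdNormalCDF x := by
  rw [stdNormalCDF_eq]
  rw [setIntegral_pos_iff_support_of_nonneg_ae
    (Filter.Eventually.of_forall fun s => (stdPDF_pos s).le) stdPDF_int.integrableOn]
  have : Function.support stdPDF = Set.univ := by
    ext s; simp [Function.mem_support, (stdPDF_pos s).ne']
  rw [this, Set.univ_inter]
  simp [Real.volume_Iic]

lemma stdPDF_even (x : ℝ) : stdPDF (-x) = stdPDF x := by
  unfold stdPDF; rw [neg_pow]; ring_nf

lemma sqrt_two_pi : Real.sqrt (2 * Real.pi) = 2 * Real.sqrt (Real.pi / 2) := by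
  rw [show (2:ℝ) * Real.pi = (2:ℝ)^2 * (Real.pi/2) by ring,
    Real.sqrt_mul (by positivity), Real.sqrt_sq (by norm_num)]

section main
variable {k σ : ℝ} (hk : 0 < k) (hσ : 0 < σ)

lemma G_hasDerivAt (t : ℝ) :
    HasDerivAt (fun t : ℝ => t / (2 * k) - 1 / 2 + stdNormalCDF (-t / σ))
      (1 / (2 * k) - stdPDF (t / σ) / σ) t := by
  have h1 : HasDerivAt (fun t : ℝ => t / (2 * k) - 1 / 2) (1 / (2 * k)) t := by
    simpa using ((hasDerivAt_id t).div_const (2 * k)).sub_const (1/2)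
  have h2 : HasDerivAt (fun t : ℝ => -t / σ) (-1 / σ) t := by
    simpa using ((hasDerivAt_id t).neg.div_const σ)
  have h3 := (cdf_hasDerivAt (-t / σ)).comp t h2
  have := h1.add h3
  have e : 1 / (2 * k) - stdPDF (t / σ) / σ = 1 / (2 * k) + stdPDF (-t / σ) * (-1 / σ) := by
    rw [show -t / σ = -(t / σ) by ring, stdPDF_even]
    ring
  rw [e]; exact this

lemma G_cont : Continuous (fun t : ℝ => t / (2 * k) - 1 / 2 + stdNormalCDF (-t / σ)) :=
  Differentiable.continuous (fun t => (G_hasDerivAt (k := k) (σ := σ) t).differentiableAt)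

lemma G_zero : (0:ℝ) / (2 * k) - 1 / 2 + stdNormalCDF (-0 / σ) = 0 := by
  rw [show -(0:ℝ) / σ = 0 by ring, cdf_zero]; ring

lemma G_deriv (t : ℝ) :
    deriv (fun t : ℝ => t / (2 * k) - 1 / 2 + stdNormalCDF (-t / σ)) t
      = 1 / (2 * k) - stdPDF (t / σ) / σ :=
  (G_hasDerivAt t).deriv

lemma stdPDF_anti {a b : ℝ} (ha : 0 ≤ a) (hab : a < b) : stdPDF b < stdPDF a := by
  unfold stdPDF
  have : -b ^ 2 / 2 < -a ^ 2 / 2 := by nlinarith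
  exact mul_lt_mul_of_pos_left (Real.exp_lt_exp.2 this)
    (inv_pos.2 (Real.sqrt_pos.2 (by positivity)))

include hσ in
lemma G_strictConvex : StrictConvexOn ℝ (Set.Ici 0)
    (fun t : ℝ => t / (2 * k) - 1 / 2 + stdNormalCDF (-t / σ)) := by
  apply StrictMonoOn.strictConvexOn_of_deriv (convex_Ici 0) G_cont.continuousOn
  rw [interior_Ici]
  intro a ha b hb hab
  rw [G_deriv, G_deriv]
  have ha0 : (0:ℝ) < a := ha
  have : stdPDF (b / σ) < stdPDF (a / σ) :=
    stdPDF_anti (by positivity) ((div_lt_div_iff_of_pos_right hσ).2 hab)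
  have := (div_lt_div_iff_of_pos_right hσ).2 this
  linarith

end main

lemma stdPDF_zero : stdPDF 0 = (Real.sqrt (2 * Real.pi))⁻¹ := by
  simp [stdPDF]

lemma key_iff {k σ : ℝ} (hk : 0 < k) (hσ : 0 < σ) : σ * Real.sqrt (Real.pi / 2) < k ↔ 1 / (2 * k) < stdPDF 0 / σ := by
  have hs : 0 < Real.sqrt (Real.pi / 2) := Real.sqrt_pos.2 (by positivity)
  rw [stdPDF_zero, sqrt_two_pi]
  rw [show ((2:ℝ) * Real.sqrt (Real.pi / 2))⁻¹ / σ = 1 / (σ * (2 * Real.sqrt (Real.pi / 2))) by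
    rw [div_eq_mul_inv, one_div, mul_inv]; ring]
  rw [one_div_lt_one_div (by positivity) (by positivity)]
  constructor <;> intro h <;> nlinarith

/-- For k, σ > 0, the equation t/(2k) - 1/2 + Φ(-t/σ) = 0 has a unique strictly
positive solution iff k > σ√(π/2), and any such solution satisfies t < k. -/
theorem stmt0 (k σ : ℝ) (hk : 0 < k) (hσ : 0 < σ) :
    ((∃! t : ℝ, 0 < t ∧ t / (2 * k) - 1 / 2 + stdNormalCDF (-t / σ) = 0) ↔
      σ * Real.sqrt (Real.pi / 2) < k) ∧
    (∀ t : ℝ, 0 < t → t / (2 * k) - 1 / 2 + stdNormalCDF (-t / σ) = 0 → t < k) := by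
  set G : ℝ → ℝ := fun t => t / (2 * k) - 1 / 2 + stdNormalCDF (-t / σ) with hG
  show ((∃! t : ℝ, 0 < t ∧ G t = 0) ↔ σ * Real.sqrt (Real.pi / 2) < k) ∧
    (∀ t : ℝ, 0 < t → G t = 0 → t < k)
  have hGz : G 0 = 0 := G_zero
  have hcont : Continuous G := G_cont
  have hderiv0 : HasDerivAt G (1 / (2 * k) - stdPDF ((0:ℝ) / σ) / σ) 0 := G_hasDerivAt 0
  have hderivAll : ∀ x : ℝ, deriv G x = 1 / (2 * k) - stdPDF (x / σ) / σ := fun x => G_deriv x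
  have hconv : StrictConvexOn ℝ (Set.Ici 0) G := G_strictConvex hσ
  have hGlb : ∀ t : ℝ, t / (2 * k) - 1 / 2 < G t := by
    intro t
    have := cdf_pos (-t / σ)
    simp only [hG]
    linarith
  clear_value G
  have part2 : ∀ t : ℝ, 0 < t → G t = 0 → t < k := by
    intro t ht h0
    have h1 := hGlb t
    rw [h0] at h1
    have h2 : t / (2 * k) < 1 / 2 := by linarith
    rw [div_lt_iff₀ (by positivity)] at h2
    linarith
  refine ⟨⟨?_, ?_⟩, part2⟩
  · -- forward: existence of unique root implies k > σ√(π/2)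
    intro hex
    by_contra hle
    push_neg at hle
    obtain ⟨t, ⟨ht, heq⟩, -⟩ := hex
    have hnot : ¬ (1 / (2 * k) < stdPDF 0 / σ) := by
      rw [← key_iff hk hσ]; exact not_lt.2 hle
    push_neg at hnot
    have hmono : StrictMonoOn G (Set.Ici 0) := by
      apply strictMonoOn_of_deriv_pos (convex_Ici 0) hcont.continuousOn
      intro x hx
      rw [interior_Ici] at hx
      rw [hderivAll x]
      have hpdf : stdPDF (x / σ) < stdPDF 0 := stdPDF_anti le_rfl (div_pos hx hσ)
      have : stdPDF (x / σ) / σ < stdPDF 0 / σ := (div_lt_div_iff_of_pos_right hσ).2 hpdf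
      linarith
    have := hmono (Set.self_mem_Ici) (Set.mem_Ici.2 ht.le) ht
    rw [hGz, heq] at this
    exact lt_irrefl 0 this
  · -- reverse: k > σ√(π/2) implies existence and uniqueness
    intro hlt
    have hd0 : 1 / (2 * k) - stdPDF ((0:ℝ) / σ) / σ < 0 := by
      rw [zero_div]
      have := (key_iff hk hσ).1 hlt
      linarith
    -- find t0 > 0 with G t0 < 0
    have hslope := hasDerivAt_iff_tendsto_slope.1 hderiv0
    have hneg : ∀ᶠ x in nhdsWithin (0:ℝ) {(0:ℝ)}ᶜ, slope G 0 x < 0 :=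
      hslope.eventually_lt_const hd0
    have hneg' : ∀ᶠ x in nhdsWithin (0:ℝ) (Set.Ioi 0), slope G 0 x < 0 :=
      hneg.filter_mono (nhdsWithin_mono 0 (fun x hx => ne_of_gt hx))
    obtain ⟨t0, hs0, ht0⟩ := (hneg'.and self_mem_nhdsWithin).exists
    have ht0' : (0:ℝ) < t0 := ht0
    have hGt0 : G t0 < 0 := by
      rw [slope_def_field, hGz, sub_zero, sub_zero] at hs0
      rcases div_neg_iff.1 hs0 with ⟨_, h⟩ | ⟨h, _⟩
      · linarith
      · exact h
    have hG2k : 0 < G (2 * k) := by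
      have h1 := hGlb (2 * k)
      have : (2 * k) / (2 * k) = 1 := div_self (by positivity)
      rw [this] at h1
      linarith
    have ht02k : t0 < 2 * k := by
      have h1 := hGlb t0
      have h2 : t0 / (2 * k) < 1 / 2 := by linarith
      rw [div_lt_iff₀ (by positivity)] at h2
      linarith
    -- IVT
    have hiv := intermediate_value_Ioo ht02k.le (hcont.continuousOn (s := Set.Icc t0 (2*k)))
    have h0mem : (0:ℝ) ∈ Set.Ioo (G t0) (G (2 * k)) := ⟨hGt0, hG2k⟩
    obtain ⟨t, htmem, htroot⟩ := hiv h0mem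
    have htpos : 0 < t := lt_trans ht0' htmem.1
    -- uniqueness via strict convexity
    have huniq : ∀ a b : ℝ, 0 < a → G a = 0 → 0 < b → G b = 0 → a < b → False := by
      intro a b ha hGa hb hGb hab
      have hb0 : (0:ℝ) ≠ b := ne_of_lt hb
      have hl1 : 0 < (b - a) / b := div_pos (by linarith) hb
      have hl2 : 0 < a / b := by positivity
      have hsum : (b - a) / b + a / b = 1 := by field_simp; ring
      have := hconv.2 Set.self_mem_Ici (Set.mem_Ici.2 hb.le) hb0 hl1 hl2 hsum
      rw [smul_eq_mul, smul_eq_mul, smul_eq_mul, smul_eq_mul, mul_zero, zero_add,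
        hGz, hGb, mul_zero, mul_zero, add_zero] at this
      rw [show a / b * b = a by field_simp] at this
      rw [hGa] at this
      exact lt_irrefl 0 this
    refine ⟨t, ⟨htpos, htroot⟩, ?_⟩
    intro y ⟨hy, hGy⟩
    rcases lt_trichotomy y t with h | h | h
    · exact absurd (huniq y t hy hGy htpos htroot h) id
    · exact h
    · exact absurd (huniq t y htpos htroot hy hGy h) id
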